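/- arXiv:2011.07001 — 2 statements merged into one kernel-verified Lean document; each statement's English description precedes it below -/
import Mathlib

section
/- Let (V, w, T, P) be a one-template parametric graph with s, t ∈ V \ T distinct. Then there exists a minimum s-t cut S of the P-fold instantiation G_P such that for every v ∈ T, either all P copies (v,0), …, (v,P−1) belong to S or none of them does. -/
open Finset

/-- Vertex set of the `P`-fold instantiation of a one-template parametric graph. -/
abbrev Inst (V : Type) [Fintype V] [DecidableEq V] (T : Finset V) (P : ℕ) : Type :=
  {x : V // x ∉ T} ⊕ ({x : V // x ∈ T} × Fin P)

/-- Weight function `w_P` of the `P`-fold instantiation `G_P`. -/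
noncomputable def instWeight {V : Type} [Fintype V] [DecidableEq V]
    (w : V → V → ℝ) (T : Finset V) (P : ℕ) :
    Inst V T P → Inst V T P → ℝ
  | Sum.inl x, Sum.inl y => w x.1 y.1
  | Sum.inl x, Sum.inr (v, _) => w x.1 v.1
  | Sum.inr (u, _), Sum.inl y => w u.1 y.1
  | Sum.inr (u, i), Sum.inr (v, j) => if i = j then w u.1 v.1 else 0

/-- Value of the cut `(S, Sᶜ)`. -/
noncomputable def cutValue {W : Type} [Fintype W] [DecidableEq W]
    (c : W → W → ℝ) (S : Finset W) : ℝ :=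
  ∑ a ∈ S, ∑ b ∈ Sᶜ, c a b

section Aux

variable {V : Type} [Fintype V] [DecidableEq V] (w : V → V → ℝ) (T : Finset V) (P : ℕ)

/-- Symmetrization of a cut using the template assignment of copy `i`. -/
noncomputable def symCut (S : Finset (Inst V T P)) (i : Fin P) : Finset (Inst V T P) :=
  letI := Classical.decPred
    (fun a : Inst V T P => Sum.elim (fun x => Sum.inl x ∈ S)
      (fun p => (Sum.inr (p.1, i) : Inst V T P) ∈ S) a)
  Finset.univ.filter
    (fun a : Inst V T P => Sum.elim (fun x => Sum.inl x ∈ S)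
      (fun p => (Sum.inr (p.1, i) : Inst V T P) ∈ S) a)

lemma mem_symCut_inl (S : Finset (Inst V T P)) (i : Fin P) (x : {x : V // x ∉ T}) :
    Sum.inl x ∈ symCut T P S i ↔ Sum.inl x ∈ S := by
  simp [symCut]

lemma mem_symCut_inr (S : Finset (Inst V T P)) (i j : Fin P) (v : {x : V // x ∈ T}) :
    Sum.inr (v, j) ∈ symCut T P S i ↔ Sum.inr (v, i) ∈ S := by
  simp [symCut]

lemma cutValue_eq_sum {W : Type} [Fintype W] [DecidableEq W]
    (c : W → W → ℝ) (S : Finset W) :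
    cutValue c S = ∑ a : W, ∑ b : W, if a ∈ S ∧ b ∉ S then c a b else 0 := by
  have h1 : ∀ a : W, (∑ b : W, if a ∈ S ∧ b ∉ S then c a b else 0)
      = if a ∈ S then (∑ b : W, if b ∈ Sᶜ then c a b else 0) else 0 := by
    intro a
    split_ifs with h
    · exact Finset.sum_congr rfl fun b _ => by simp [h]
    · simp [h]
  calc cutValue c S = ∑ a ∈ S, ∑ b ∈ Sᶜ, c a b := rfl
    _ = ∑ a : W, if a ∈ S then (∑ b ∈ Sᶜ, c a b) else 0 := by
        rw [Finset.sum_ite_mem, Finset.univ_inter]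
    _ = ∑ a : W, ∑ b : W, if a ∈ S ∧ b ∉ S then c a b else 0 := by
        refine Finset.sum_congr rfl fun a _ => ?_
        rw [h1 a, Finset.sum_ite_mem, Finset.univ_inter]

/-- The template-dependent part of the cut value contributed by copy `j`. -/
noncomputable def gpart (S : Finset (Inst V T P)) (j : Fin P) : ℝ :=
  (∑ x : {x : V // x ∉ T}, ∑ v : {x : V // x ∈ T},
      if (Sum.inl x : Inst V T P) ∈ S ∧ (Sum.inr (v, j) : Inst V T P) ∉ S then w x.1 v.1 else 0)
  + (∑ v : {x : V // x ∈ T}, ∑ y : {x : V // x ∉ T},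
      if (Sum.inr (v, j) : Inst V T P) ∈ S ∧ (Sum.inl y : Inst V T P) ∉ S then w v.1 y.1 else 0)
  + (∑ u : {x : V // x ∈ T}, ∑ v : {x : V // x ∈ T},
      if (Sum.inr (u, j) : Inst V T P) ∈ S ∧ (Sum.inr (v, j) : Inst V T P) ∉ S then w u.1 v.1 else 0)

/-- The non-template part of the cut value. -/
noncomputable def llpart (S : Finset (Inst V T P)) : ℝ :=
  ∑ x : {x : V // x ∉ T}, ∑ y : {x : V // x ∉ T},
    if (Sum.inl x : Inst V T P) ∈ S ∧ (Sum.inl y : Inst V T P) ∉ S then w x.1 y.1 else 0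

lemma cutValue_decomp (S : Finset (Inst V T P)) :
    cutValue (instWeight w T P) S = llpart w T P S + ∑ j : Fin P, gpart w T P S j := by
  rw [cutValue_eq_sum]
  rw [Fintype.sum_sum_type]
  have hinner : ∀ a : Inst V T P,
      (∑ b : Inst V T P, if a ∈ S ∧ b ∉ S then instWeight w T P a b else 0)
      = (∑ y : {x : V // x ∉ T}, if a ∈ S ∧ (Sum.inl y : Inst V T P) ∉ S then
            instWeight w T P a (Sum.inl y) else 0)
        + ∑ v : {x : V // x ∈ T}, ∑ j : Fin P,
            if a ∈ S ∧ (Sum.inr (v, j) : Inst V T P) ∉ S then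
              instWeight w T P a (Sum.inr (v, j)) else 0 := by
    intro a
    rw [Fintype.sum_sum_type, Fintype.sum_prod_type]
  simp only [hinner]
  rw [Finset.sum_add_distrib, Finset.sum_add_distrib]
  have hRR : (∑ u : {x : V // x ∈ T}, ∑ i : Fin P, ∑ v : {x : V // x ∈ T}, ∑ j : Fin P,
      if (Sum.inr (u, i) : Inst V T P) ∈ S ∧ (Sum.inr (v, j) : Inst V T P) ∉ S then
        instWeight w T P (Sum.inr (u, i)) (Sum.inr (v, j)) else 0)
      = ∑ j : Fin P, ∑ u : {x : V // x ∈ T}, ∑ v : {x : V // x ∈ T},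
          if (Sum.inr (u, j) : Inst V T P) ∈ S ∧ (Sum.inr (v, j) : Inst V T P) ∉ S
            then w u.1 v.1 else 0 := by
    rw [Finset.sum_comm]
    refine Finset.sum_congr rfl fun i _ => ?_
    refine Finset.sum_congr rfl fun u _ => ?_
    refine Finset.sum_congr rfl fun v _ => ?_
    have : ∀ j : Fin P,
        (if (Sum.inr (u, i) : Inst V T P) ∈ S ∧ (Sum.inr (v, j) : Inst V T P) ∉ S then
          instWeight w T P (Sum.inr (u, i)) (Sum.inr (v, j)) else 0)
        = if j = i then
            (if (Sum.inr (u, i) : Inst V T P) ∈ S ∧ (Sum.inr (v, j) : Inst V T P) ∉ S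
              then w u.1 v.1 else 0) else 0 := by
      intro j
      by_cases hji : j = i
      · subst hji; simp [instWeight]
      · simp only [instWeight, hji, if_neg]
        have : ¬ i = j := fun h => hji h.symm
        simp [this, hji]
    simp only [this]
    rw [Finset.sum_ite_eq' Finset.univ i]
    simp
  simp only [Fintype.sum_prod_type]
  rw [hRR]
  simp only [instWeight]
  simp only [llpart, gpart]
  rw [Finset.sum_add_distrib, Finset.sum_add_distrib]
  have hB : (∑ x : {x : V // x ∉ T}, ∑ v : {x : V // x ∈ T}, ∑ j : Fin P,
      if (Sum.inl x : Inst V T P) ∈ S ∧ (Sum.inr (v, j) : Inst V T P) ∉ S then w x.1 v.1 else 0)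
      = ∑ j : Fin P, ∑ x : {x : V // x ∉ T}, ∑ v : {x : V // x ∈ T},
        if (Sum.inl x : Inst V T P) ∈ S ∧ (Sum.inr (v, j) : Inst V T P) ∉ S then w x.1 v.1 else 0 := by
    rw [show (∑ x : {x : V // x ∉ T}, ∑ v : {x : V // x ∈ T}, ∑ j : Fin P,
      if (Sum.inl x : Inst V T P) ∈ S ∧ (Sum.inr (v, j) : Inst V T P) ∉ S then w x.1 v.1 else 0)
      = ∑ x : {x : V // x ∉ T}, ∑ j : Fin P, ∑ v : {x : V // x ∈ T},
        if (Sum.inl x : Inst V T P) ∈ S ∧ (Sum.inr (v, j) : Inst V T P) ∉ S then w x.1 v.1 else 0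
      from Finset.sum_congr rfl fun _ _ => Finset.sum_comm]
    exact Finset.sum_comm
  have hC : (∑ u : {x : V // x ∈ T}, ∑ i : Fin P, ∑ y : {x : V // x ∉ T},
      if (Sum.inr (u, i) : Inst V T P) ∈ S ∧ (Sum.inl y : Inst V T P) ∉ S then w u.1 y.1 else 0)
      = ∑ i : Fin P, ∑ u : {x : V // x ∈ T}, ∑ y : {x : V // x ∉ T},
        if (Sum.inr (u, i) : Inst V T P) ∈ S ∧ (Sum.inl y : Inst V T P) ∉ S then w u.1 y.1 else 0 :=
    Finset.sum_comm
  rw [hB, hC]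
  ring

lemma llpart_symCut (S : Finset (Inst V T P)) (i : Fin P) :
    llpart w T P (symCut T P S i) = llpart w T P S := by
  simp only [llpart, mem_symCut_inl]

lemma gpart_symCut (S : Finset (Inst V T P)) (i j : Fin P) :
    gpart w T P (symCut T P S i) j = gpart w T P S i := by
  simp only [gpart, mem_symCut_inl, mem_symCut_inr]

lemma cutValue_symCut (S : Finset (Inst V T P)) (i : Fin P) :
    cutValue (instWeight w T P) (symCut T P S i)
      = llpart w T P S + (P : ℝ) * gpart w T P S i := by
  rw [cutValue_decomp]
  simp [llpart_symCut, gpart_symCut, Finset.sum_const, mul_comm]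

lemma sum_cutValue_symCut (S : Finset (Inst V T P)) :
    ∑ i : Fin P, cutValue (instWeight w T P) (symCut T P S i)
      = (P : ℝ) * cutValue (instWeight w T P) S := by
  simp only [cutValue_symCut, Finset.sum_add_distrib, Finset.sum_const,
    cutValue_decomp w T P S, ← Finset.mul_sum]
  simp [mul_add]

lemma exists_symCut_le (S : Finset (Inst V T P)) (hP : 1 ≤ P) :
    ∃ i : Fin P, cutValue (instWeight w T P) (symCut T P S i)
      ≤ cutValue (instWeight w T P) S := by
  have hne : (Finset.univ : Finset (Fin P)).Nonempty := by
    have : 0 < P := hP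
    simp [Finset.univ_nonempty_iff, Fin.pos_iff_nonempty.mp this]
  have hsum : ∑ i : Fin P, cutValue (instWeight w T P) (symCut T P S i)
      ≤ ∑ _i : Fin P, cutValue (instWeight w T P) S := by
    rw [sum_cutValue_symCut]
    simp [Finset.sum_const]
  obtain ⟨i, _, hi⟩ := Finset.exists_le_of_sum_le hne hsum
  exact ⟨i, hi⟩


end Aux

/-- there is a minimum `s`-`t` cut of the `P`-fold instantiation `G_P` in
which, for every template vertex `v`, either all `P` copies of `v` are on the `s`-side
or none of them is. -/
theorem exists_minCut_copies_same_side
    {V : Type} [Fintype V] [DecidableEq V] (w : V → V → ℝ)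
    (T : Finset V) (P : ℕ) (hT : T.Nonempty) (hP : 1 ≤ P)
    (hsymm : ∀ u v, w u v = w v u) (hnonneg : ∀ u v, 0 ≤ w u v)
    (hdiag : ∀ v, w v v = 0)
    (s t : V) (hs : s ∉ T) (ht : t ∉ T) (hst : s ≠ t) :
    ∃ S : Finset (Inst V T P),
      Sum.inl ⟨s, hs⟩ ∈ S ∧ Sum.inl ⟨t, ht⟩ ∉ S ∧
      (∀ S' : Finset (Inst V T P), Sum.inl ⟨s, hs⟩ ∈ S' → Sum.inl ⟨t, ht⟩ ∉ S' →
        cutValue (instWeight w T P) S ≤ cutValue (instWeight w T P) S') ∧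
      (∀ v : {x : V // x ∈ T},
        (∀ i : Fin P, Sum.inr (v, i) ∈ S) ∨ (∀ i : Fin P, Sum.inr (v, i) ∉ S)) := by
  classical
  set c := instWeight w T P with hc
  set C : Finset (Finset (Inst V T P)) :=
    Finset.univ.filter (fun S => Sum.inl ⟨s, hs⟩ ∈ S ∧ Sum.inl ⟨t, ht⟩ ∉ S) with hC
  have hne : C.Nonempty := by
    refine ⟨{Sum.inl ⟨s, hs⟩}, ?_⟩
    simp only [hC, Finset.mem_filter, Finset.mem_univ, true_and, Finset.mem_singleton]
    intro h
    have := Sum.inl.inj h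
    exact hst (congrArg Subtype.val this).symm
  obtain ⟨S₀, hS₀C, hmin⟩ := Finset.exists_min_image C (cutValue c) hne
  rw [hC, Finset.mem_filter] at hS₀C
  obtain ⟨-, hS₀s, hS₀t⟩ := hS₀C
  obtain ⟨i, hile⟩ := exists_symCut_le w T P S₀ hP
  refine ⟨symCut T P S₀ i, ?_, ?_, ?_, ?_⟩
  · rw [mem_symCut_inl]; exact hS₀s
  · rw [mem_symCut_inl]; exact hS₀t
  · intro S' hs' ht'
    have hS'C : S' ∈ C := by
      rw [hC, Finset.mem_filter]; exact ⟨Finset.mem_univ _, hs', ht'⟩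
    exact le_trans hile (hmin S' hS'C)
  · intro v
    by_cases hv : (Sum.inr (v, i) : Inst V T P) ∈ S₀
    · left; intro j; rw [mem_symCut_inr]; exact hv
    · right; intro j; rw [mem_symCut_inr]; exact hv
end

section
/- Let (V, w, T, P) be a one-template parametric graph and let s, t ∈ V be distinct. An all-s-t cut of the P-fold instantiation G_P is a vertex subset S of G_P that contains every copy of s and no copy of t; its value is the sum of the weights of pairs crossing S. Then the minimum value of an all-s-t cut of G_P equals the minimum value of an s-t cut of the reweighted graph G'. -/
open Finset

/-- Weight function `w'` of the reweighted graph `G'`. -/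
noncomputable def reWeight {V : Type} [DecidableEq V]
    (w : V → V → ℝ) (T : Finset V) (P : ℕ) : V → V → ℝ :=
  fun u v => if u ∈ T ∨ v ∈ T then (P : ℝ) * w u v else w u v

/-- `a` is a copy (instance) of the vertex `v ∈ V` in the instantiation: a template vertex
has `P` copies, a non-template vertex is its own unique copy. -/
def IsCopy {V : Type} [Fintype V] [DecidableEq V] {T : Finset V} {P : ℕ}
    (v : V) : Inst V T P → Prop
  | Sum.inl x => x.1 = v
  | Sum.inr (u, _) => u.1 = v


section AuxOneTemplate
open Finset
variable {V : Type} [Fintype V] [DecidableEq V] (T : Finset V) (P : ℕ)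

noncomputable def indR {W : Type} [DecidableEq W] (S : Finset W) (a : W) : ℝ :=
  if a ∈ S then 1 else 0

lemma cutValue_eq {W : Type} [Fintype W] [DecidableEq W] (c : W → W → ℝ) (S : Finset W) :
    cutValue c S = ∑ a : W, ∑ b : W, indR S a * (1 - indR S b) * c a b := by
  rw [cutValue]
  have h1 : ∀ a : W, ∑ b ∈ Sᶜ, c a b = ∑ b : W, (1 - indR S b) * c a b := by
    intro a
    rw [show Sᶜ = univ.filter (· ∉ S) by ext b; simp]
    rw [Finset.sum_filter]
    exact Finset.sum_congr rfl fun b _ => by by_cases hb : b ∈ S <;> simp [indR, hb]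
  have h2 : ∀ (f : W → ℝ), ∑ a ∈ S, f a = ∑ a : W, indR S a * f a := by
    intro f
    rw [show S = univ.filter (· ∈ S) by ext b; simp]
    rw [Finset.sum_filter]
    exact Finset.sum_congr rfl fun a _ => by by_cases ha : a ∈ S <;> simp [indR, ha]
  rw [h2]
  refine Finset.sum_congr rfl fun a _ => ?_
  rw [h1, Finset.mul_sum]
  exact Finset.sum_congr rfl fun b _ => by ring

def gfun (v : V) (i : Fin P) : Inst V T P :=
  if h : v ∈ T then Sum.inr (⟨v, h⟩, i) else Sum.inl ⟨v, h⟩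

def pSlice (S : Finset (Inst V T P)) (i : Fin P) : Finset V :=
  univ.filter (fun v => gfun T P v i ∈ S)

def proj : Inst V T P → V
  | Sum.inl x => x.1
  | Sum.inr (u, _) => u.1

def lift (S' : Finset V) : Finset (Inst V T P) :=
  univ.filter (fun a => proj T P a ∈ S')

lemma mem_slice (S : Finset (Inst V T P)) (i : Fin P) (v : V) :
    v ∈ pSlice T P S i ↔ gfun T P v i ∈ S := by simp [pSlice]

lemma mem_lift (S' : Finset V) (a : Inst V T P) :
    a ∈ lift T P S' ↔ proj T P a ∈ S' := by simp [lift]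

lemma gfun_not_mem (x : {x : V // x ∉ T}) (i : Fin P) : gfun T P x.1 i = Sum.inl x := by
  simp [gfun, x.2]

lemma gfun_mem (x : {x : V // x ∈ T}) (i : Fin P) : gfun T P x.1 i = Sum.inr (x, i) := by
  simp [gfun, x.2]

lemma proj_gfun (v : V) (i : Fin P) : proj T P (gfun T P v i) = v := by
  by_cases h : v ∈ T <;> simp [gfun, h, proj]

lemma slice_lift (S' : Finset V) (i : Fin P) : pSlice T P (lift T P S') i = S' := by
  ext v
  rw [mem_slice T P]
  simp [lift, proj_gfun]

variable (w : V → V → ℝ)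

noncomputable def blkA (S : Finset (Inst V T P)) : ℝ :=
  ∑ x : {x : V // x ∉ T}, ∑ y : {x : V // x ∉ T},
    indR S (Sum.inl x) * (1 - indR S (Sum.inl y)) * w x.1 y.1

noncomputable def blkB (S : Finset (Inst V T P)) (i : Fin P) : ℝ :=
  (∑ x : {x : V // x ∉ T}, ∑ v : {x : V // x ∈ T},
    indR S (Sum.inl x) * (1 - indR S (Sum.inr (v, i))) * w x.1 v.1)
  + (∑ u : {x : V // x ∈ T}, ∑ y : {x : V // x ∉ T},
    indR S (Sum.inr (u, i)) * (1 - indR S (Sum.inl y)) * w u.1 y.1)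
  + (∑ u : {x : V // x ∈ T}, ∑ v : {x : V // x ∈ T},
    indR S (Sum.inr (u, i)) * (1 - indR S (Sum.inr (v, i))) * w u.1 v.1)

lemma comm3 {α β γ : Type} [Fintype α] [Fintype β] [Fintype γ] (f : α → β → γ → ℝ) :
    ∑ x : α, ∑ v : β, ∑ j : γ, f x v j = ∑ j : γ, ∑ x : α, ∑ v : β, f x v j := by
  calc ∑ x : α, ∑ v : β, ∑ j : γ, f x v j
      = ∑ x : α, ∑ j : γ, ∑ v : β, f x v j :=
        Finset.sum_congr rfl fun _ _ => Finset.sum_comm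
    _ = ∑ j : γ, ∑ x : α, ∑ v : β, f x v j := Finset.sum_comm

lemma instCut_expand (S : Finset (Inst V T P)) :
    cutValue (instWeight w T P) S = blkA T P w S + ∑ i : Fin P, blkB T P w S i := by
  rw [cutValue_eq]
  rw [Fintype.sum_sum_type]
  simp only [Fintype.sum_sum_type, Fintype.sum_prod_type, instWeight, mul_ite, mul_zero,
    Finset.sum_ite_eq, Finset.mem_univ, if_true, Finset.sum_add_distrib]
  rw [blkA]
  simp only [blkB, Finset.sum_add_distrib]
  have e2 : ∑ x : { x : V // x ∉ T }, ∑ v : { x : V // x ∈ T }, ∑ j : Fin P,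
        indR S (Sum.inl x) * (1 - indR S (Sum.inr (v, j))) * w x.1 v.1
      = ∑ j : Fin P, ∑ x : { x : V // x ∉ T }, ∑ v : { x : V // x ∈ T },
        indR S (Sum.inl x) * (1 - indR S (Sum.inr (v, j))) * w x.1 v.1 := comm3 _
  have e3 : ∑ u : { x : V // x ∈ T }, ∑ j : Fin P, ∑ y : { x : V // x ∉ T },
        indR S (Sum.inr (u, j)) * (1 - indR S (Sum.inl y)) * w u.1 y.1
      = ∑ j : Fin P, ∑ u : { x : V // x ∈ T }, ∑ y : { x : V // x ∉ T },
        indR S (Sum.inr (u, j)) * (1 - indR S (Sum.inl y)) * w u.1 y.1 := Finset.sum_comm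
  have e4 : ∑ u : { x : V // x ∈ T }, ∑ j : Fin P, ∑ v : { x : V // x ∈ T },
        indR S (Sum.inr (u, j)) * (1 - indR S (Sum.inr (v, j))) * w u.1 v.1
      = ∑ j : Fin P, ∑ u : { x : V // x ∈ T }, ∑ v : { x : V // x ∈ T },
        indR S (Sum.inr (u, j)) * (1 - indR S (Sum.inr (v, j))) * w u.1 v.1 := Finset.sum_comm
  rw [e2, e3, e4]
  ring

lemma sum_splitT (f : V → ℝ) :
    ∑ v : V, f v = (∑ x : {x : V // x ∉ T}, f x.1) + ∑ x : {x : V // x ∈ T}, f x.1 := by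
  rw [← Finset.sum_add_sum_compl T f]
  rw [Finset.sum_subtype T (fun x => Iff.rfl) f,
      Finset.sum_subtype Tᶜ (fun x => Finset.mem_compl) f]
  ring

lemma reCut_expand (S : Finset (Inst V T P)) (i : Fin P) :
    cutValue (reWeight w T P) (pSlice T P S i) = blkA T P w S + (P : ℝ) * blkB T P w S i := by
  rw [cutValue_eq]
  have hind : ∀ u : V, indR (pSlice T P S i) u = indR S (gfun T P u i) := by
    intro u; simp [indR, pSlice]
  simp only [hind]
  have hww : ∀ (x y : {x : V // x ∉ T}), reWeight w T P x.1 y.1 = w x.1 y.1 :=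
    fun x y => by simp [reWeight, x.2, y.2]
  have hwt : ∀ (x : {x : V // x ∉ T}) (y : {x : V // x ∈ T}),
      reWeight w T P x.1 y.1 = (P : ℝ) * w x.1 y.1 := fun x y => by simp [reWeight, y.2]
  have htw : ∀ (x : {x : V // x ∈ T}) (y : {x : V // x ∉ T}),
      reWeight w T P x.1 y.1 = (P : ℝ) * w x.1 y.1 := fun x y => by simp [reWeight, x.2]
  have htt : ∀ (x y : {x : V // x ∈ T}),
      reWeight w T P x.1 y.1 = (P : ℝ) * w x.1 y.1 := fun x y => by simp [reWeight, x.2]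
  simp only [sum_splitT T, Finset.sum_add_distrib, gfun_not_mem, gfun_mem,
    hww, hwt, htw, htt]
  have pull : ∀ {α β : Type} [Fintype α] [Fintype β] (f : α → β → ℝ) (g : α → β → ℝ),
      (∀ a b, f a b = (P : ℝ) * g a b) → ∑ a : α, ∑ b : β, f a b = (P : ℝ) * ∑ a : α, ∑ b : β, g a b := by
    intro α β _ _ f g h
    rw [Finset.mul_sum]
    exact Finset.sum_congr rfl fun a _ => by
      rw [Finset.mul_sum]; exact Finset.sum_congr rfl fun b _ => h a b
  rw [pull (fun x v => indR S (Sum.inl x) * (1 - indR S (Sum.inr (v, i))) * ((P : ℝ) * w x.1 v.1))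
        (fun x v => indR S (Sum.inl x) * (1 - indR S (Sum.inr (v, i))) * w x.1 v.1)
        (fun a b => by ring),
      pull (fun u y => indR S (Sum.inr (u, i)) * (1 - indR S (Sum.inl y)) * ((P : ℝ) * w u.1 y.1))
        (fun u y => indR S (Sum.inr (u, i)) * (1 - indR S (Sum.inl y)) * w u.1 y.1)
        (fun a b => by ring),
      pull (fun u v => indR S (Sum.inr (u, i)) * (1 - indR S (Sum.inr (v, i))) * ((P : ℝ) * w u.1 v.1))
        (fun u v => indR S (Sum.inr (u, i)) * (1 - indR S (Sum.inr (v, i))) * w u.1 v.1)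
        (fun a b => by ring)]
  rw [blkA, blkB]
  ring

lemma key_sum (S : Finset (Inst V T P)) :
    ∑ i : Fin P, cutValue (reWeight w T P) (pSlice T P S i)
      = (P : ℝ) * cutValue (instWeight w T P) S := by
  simp only [reCut_expand]
  rw [Finset.sum_add_distrib, Finset.sum_const, ← Finset.mul_sum, instCut_expand]
  simp [mul_add, nsmul_eq_mul]

lemma lift_cut (hP : 0 < P) (S' : Finset V) :
    cutValue (instWeight w T P) (lift T P S') = cutValue (reWeight w T P) S' := by
  have h := key_sum T P w (lift T P S')
  simp only [slice_lift] at h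
  rw [Finset.sum_const, Finset.card_univ, Fintype.card_fin, nsmul_eq_mul] at h
  have hP' : (P : ℝ) ≠ 0 := Nat.cast_ne_zero.mpr hP.ne'
  exact (mul_left_cancel₀ hP' h).symm

lemma isCopy_iff (v : V) (a : Inst V T P) : IsCopy v a ↔ proj T P a = v := by
  rcases a with x | ⟨u, i⟩ <;> rfl

lemma isCopy_gfun (v : V) (i : Fin P) : IsCopy v (gfun T P v i) := by
  rw [isCopy_iff, proj_gfun]

lemma instWeight_nonneg (hnn : ∀ u v, 0 ≤ w u v) (a b : Inst V T P) :
    0 ≤ instWeight w T P a b := by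
  rcases a with x | ⟨u, i⟩ <;> rcases b with y | ⟨v, j⟩ <;> simp only [instWeight]
  · exact hnn _ _
  · exact hnn _ _
  · exact hnn _ _
  · split
    · exact hnn _ _
    · exact le_refl _

lemma reWeight_nonneg (hnn : ∀ u v, 0 ≤ w u v) (a b : V) : 0 ≤ reWeight w T P a b := by
  rw [reWeight]
  split
  · exact mul_nonneg (Nat.cast_nonneg P) (hnn _ _)
  · exact hnn _ _

lemma cutValue_nonneg {W : Type} [Fintype W] [DecidableEq W] (c : W → W → ℝ)
    (h : ∀ a b, 0 ≤ c a b) (S : Finset W) : 0 ≤ cutValue c S :=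
  Finset.sum_nonneg fun a _ => Finset.sum_nonneg fun b _ => h a b

end AuxOneTemplate

/-- the minimum value of an all-`s`-`t` cut of the `P`-fold instantiation
`G_P` (a cut containing every copy of `s` and no copy of `t`) equals the minimum value
of an `s`-`t` cut of the reweighted graph `G'`. -/
theorem minAllCut_inst_eq_minCut_reweight
    {V : Type} [Fintype V] [DecidableEq V] (w : V → V → ℝ)
    (T : Finset V) (P : ℕ) (hT : T.Nonempty) (hP : 1 ≤ P)
    (hsymm : ∀ u v, w u v = w v u) (hnonneg : ∀ u v, 0 ≤ w u v)
    (hdiag : ∀ v, w v v = 0)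
    (s t : V) (hst : s ≠ t) :
    sInf {x : ℝ | ∃ S : Finset (Inst V T P),
        (∀ a : Inst V T P, IsCopy s a → a ∈ S) ∧
        (∀ a : Inst V T P, IsCopy t a → a ∉ S) ∧
        cutValue (instWeight w T P) S = x} =
    sInf {x : ℝ | ∃ S : Finset V,
        s ∈ S ∧ t ∉ S ∧ cutValue (reWeight w T P) S = x} := by
  have hP0 : 0 < P := hP
  have hFin : Nonempty (Fin P) := ⟨⟨0, hP⟩⟩
  have bddL : BddBelow {x : ℝ | ∃ S : Finset (Inst V T P),
      (∀ a : Inst V T P, IsCopy s a → a ∈ S) ∧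
      (∀ a : Inst V T P, IsCopy t a → a ∉ S) ∧
      cutValue (instWeight w T P) S = x} := by
    refine ⟨0, ?_⟩
    rintro x ⟨S, -, -, rfl⟩
    exact cutValue_nonneg _ (instWeight_nonneg T P w hnonneg) S
  have bddR : BddBelow {x : ℝ | ∃ S : Finset V,
      s ∈ S ∧ t ∉ S ∧ cutValue (reWeight w T P) S = x} := by
    refine ⟨0, ?_⟩
    rintro x ⟨S, -, -, rfl⟩
    exact cutValue_nonneg _ (reWeight_nonneg T P w hnonneg) S
  have hLne : {x : ℝ | ∃ S : Finset (Inst V T P),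
      (∀ a : Inst V T P, IsCopy s a → a ∈ S) ∧
      (∀ a : Inst V T P, IsCopy t a → a ∉ S) ∧
      cutValue (instWeight w T P) S = x}.Nonempty := by
    refine ⟨_, lift T P {s}, ?_, ?_, rfl⟩
    · intro a ha
      rw [mem_lift, (isCopy_iff T P s a).mp ha]
      exact Finset.mem_singleton_self s
    · intro a ha h
      rw [mem_lift, (isCopy_iff T P t a).mp ha] at h
      exact (Ne.symm hst) (Finset.mem_singleton.mp h)
  have hRne : {x : ℝ | ∃ S : Finset V,
      s ∈ S ∧ t ∉ S ∧ cutValue (reWeight w T P) S = x}.Nonempty := by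
    refine ⟨_, {s}, Finset.mem_singleton_self s, ?_, rfl⟩
    exact fun h => (Ne.symm hst) (Finset.mem_singleton.mp h)
  apply le_antisymm
  · refine le_csInf hRne ?_
    rintro x ⟨S', hsS, htS, rfl⟩
    refine csInf_le bddL ⟨lift T P S', ?_, ?_, lift_cut T P w hP0 S'⟩
    · intro a ha
      rw [mem_lift, (isCopy_iff T P s a).mp ha]
      exact hsS
    · intro a ha h
      rw [mem_lift, (isCopy_iff T P t a).mp ha] at h
      exact htS h
  · refine le_csInf hLne ?_
    rintro x ⟨S, hsS, htS, rfl⟩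
    have hsum : ∑ i : Fin P, cutValue (reWeight w T P) (pSlice T P S i)
        ≤ ∑ _i : Fin P, cutValue (instWeight w T P) S := by
      rw [key_sum, Finset.sum_const, Finset.card_univ, Fintype.card_fin, nsmul_eq_mul]
    obtain ⟨i, -, hi⟩ := Finset.exists_le_of_sum_le Finset.univ_nonempty hsum
    refine le_trans (csInf_le bddR ⟨pSlice T P S i, ?_, ?_, rfl⟩) hi
    · rw [mem_slice T P]
      exact hsS _ (isCopy_gfun T P s i)
    · intro h
      rw [mem_slice T P] at h
      exact htS _ (isCopy_gfun T P t i) h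
end
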